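/- Let A be an m×n real matrix with m ≥ 1, let b ∈ ℝᵐ, and let M = A ⊙ Aᵀ be the m×m tropical product of A with its transpose. If (M ⊙ M⁻)_{ij} ≤ b_i − b_j for all i, j ∈ {1,…,m}, then the vector X = Aᵀ ⊙ (M⁻ ⊙ b) ∈ ℝⁿ is a solution of the system A ⊙ X = b. -/

import Mathlib

/-!
By associativity of the max-plus product, `A ⊙ (Aᵀ ⊙ (M⁻ ⊙ b)) = (M ⊙ M⁻) ⊙ b`. Writing
`C = M ⊙ M⁻`, the hypothesis `C i j ≤ b i - b j` gives `(C ⊙ b) i ≤ b i`, and the reverse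
inequality follows from `C i i ≥ 0`, which holds for every square `M`: expanding a maximal
permutation of `per(M)` along row `i` gives `per(M) ≤ M i k + per(M(i|k))` for some `k`.
-/

open Matrix

/-- Tropical (max-plus) permanent of a square real matrix:
`per(A) = max over permutations σ of ∑ i, A i (σ i)`. -/
noncomputable def tperm {p : ℕ} (A : Matrix (Fin p) (Fin p) ℝ) : ℝ :=
  Finset.univ.sup' ⟨1, Finset.mem_univ 1⟩
    (fun σ : Equiv.Perm (Fin p) => ∑ i, A i (σ i))

/-- `del A i j` is the matrix obtained from `A` by deleting row `i` and column `j`. -/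
def del {p : ℕ} (A : Matrix (Fin (p+1)) (Fin (p+1)) ℝ) (i j : Fin (p+1)) :
    Matrix (Fin p) (Fin p) ℝ :=
  A.submatrix i.succAbove j.succAbove

/-- Tropical (max-plus) matrix product: `(P ⊙ Q) i j = max_k (P i k + Q k j)`. -/
noncomputable def tmul {l m n : ℕ} (P : Matrix (Fin l) (Fin (m+1)) ℝ)
    (Q : Matrix (Fin (m+1)) (Fin n) ℝ) : Matrix (Fin l) (Fin n) ℝ :=
  fun i j => Finset.univ.sup' ⟨0, Finset.mem_univ 0⟩ (fun k => P i k + Q k j)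

/-- Tropical (max-plus) matrix-vector product: `(P ⊙ x) i = max_k (P i k + x k)`. -/
noncomputable def tmulVec {l m : ℕ} (P : Matrix (Fin l) (Fin (m+1)) ℝ)
    (x : Fin (m+1) → ℝ) : Fin l → ℝ :=
  fun i => Finset.univ.sup' ⟨0, Finset.mem_univ 0⟩ (fun k => P i k + x k)

/-- The ε-adjoint: `adj(A)_{ij} = per(A(j|i))`. -/
noncomputable def tadj {p : ℕ} (A : Matrix (Fin (p+1)) (Fin (p+1)) ℝ) :
    Matrix (Fin (p+1)) (Fin (p+1)) ℝ :=
  fun i j => tperm (del A j i)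

/-- The pseudo-inverse: `A⁻_{ij} = per(A(j|i)) - per(A)`. -/
noncomputable def pinv {p : ℕ} (A : Matrix (Fin (p+1)) (Fin (p+1)) ℝ) :
    Matrix (Fin (p+1)) (Fin (p+1)) ℝ :=
  fun i j => tperm (del A j i) - tperm A

lemma tmulVec_le_iff {l m : ℕ} {P : Matrix (Fin l) (Fin (m+1)) ℝ} {x : Fin (m+1) → ℝ}
    {i : Fin l} {c : ℝ} : tmulVec P x i ≤ c ↔ ∀ k, P i k + x k ≤ c :=
  (Finset.sup'_le_iff _ _).trans (by simp)

lemma le_tmulVec {l m : ℕ} (P : Matrix (Fin l) (Fin (m+1)) ℝ) (x : Fin (m+1) → ℝ)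
    (i : Fin l) (k : Fin (m+1)) : P i k + x k ≤ tmulVec P x i :=
  Finset.le_sup' (fun k => P i k + x k) (Finset.mem_univ k)

lemma tmul_le_iff {l m n : ℕ} {P : Matrix (Fin l) (Fin (m+1)) ℝ}
    {Q : Matrix (Fin (m+1)) (Fin n) ℝ} {i : Fin l} {j : Fin n} {c : ℝ} :
    tmul P Q i j ≤ c ↔ ∀ k, P i k + Q k j ≤ c :=
  (Finset.sup'_le_iff _ _).trans (by simp)

lemma le_tmul {l m n : ℕ} (P : Matrix (Fin l) (Fin (m+1)) ℝ) (Q : Matrix (Fin (m+1)) (Fin n) ℝ)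
    (i : Fin l) (j : Fin n) (k : Fin (m+1)) : P i k + Q k j ≤ tmul P Q i j :=
  Finset.le_sup' (fun k => P i k + Q k j) (Finset.mem_univ k)

lemma tmulVec_tmulVec {l m n : ℕ} (P : Matrix (Fin l) (Fin (m+1)) ℝ)
    (Q : Matrix (Fin (m+1)) (Fin (n+1)) ℝ) (x : Fin (n+1) → ℝ) :
    tmulVec P (tmulVec Q x) = tmulVec (tmul P Q) x := by
  ext i
  refine eq_of_forall_ge_iff fun c => ?_
  have hl : tmulVec P (tmulVec Q x) i ≤ c ↔ ∀ k j, P i k + (Q k j + x j) ≤ c := by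
    simp only [tmulVec_le_iff, ← le_sub_iff_add_le']
  have hr : tmulVec (tmul P Q) x i ≤ c ↔ ∀ j k, P i k + Q k j + x j ≤ c := by
    simp only [tmulVec_le_iff, ← le_sub_iff_add_le, tmul_le_iff]
  simp only [hl, hr, add_assoc]
  exact forall_comm

lemma Equiv.Perm.exists_succAbove_apply_eq {p : ℕ} (σ : Equiv.Perm (Fin (p+1))) (i : Fin (p+1)) :
    ∃ τ : Equiv.Perm (Fin p), ∀ a, (σ i).succAbove (τ a) = σ (i.succAbove a) := by
  set e : Option (Fin p) ≃ Option (Fin p) :=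
    ((finSuccEquiv' i).symm.trans σ).trans (finSuccEquiv' (σ i))
  have he_none : e none = none := by simp [e]
  refine ⟨e.removeNone, fun a => ?_⟩
  have he_some : ∃ x, e (some a) = some x :=
    Option.ne_none_iff_exists'.mp fun h => by simpa using e.injective (h.trans he_none.symm)
  have := congrArg (finSuccEquiv' (σ i)).symm (Equiv.removeNone_some e he_some)
  simpa [e] using this

lemma sum_perm_le_add_tperm_del {p : ℕ} (M : Matrix (Fin (p+1)) (Fin (p+1)) ℝ)
    (σ : Equiv.Perm (Fin (p+1))) (i : Fin (p+1)) :
    ∑ j, M j (σ j) ≤ M i (σ i) + tperm (del M i (σ i)) := by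
  obtain ⟨τ, hτ⟩ := σ.exists_succAbove_apply_eq i
  rw [Fin.sum_univ_succAbove _ i]
  gcongr
  calc ∑ a, M (i.succAbove a) (σ (i.succAbove a)) = ∑ a, del M i (σ i) a (τ a) := by
        simp only [del, submatrix_apply, hτ]
    _ ≤ tperm (del M i (σ i)) :=
        Finset.le_sup' (fun τ => ∑ a, del M i (σ i) a (τ a)) (Finset.mem_univ τ)

lemma zero_le_tmul_pinv_self {p : ℕ} (M : Matrix (Fin (p+1)) (Fin (p+1)) ℝ) (i : Fin (p+1)) :
    0 ≤ tmul M (pinv M) i i := by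
  obtain ⟨σ, -, hσ⟩ := Finset.exists_mem_eq_sup' ⟨1, Finset.mem_univ 1⟩
    (fun σ : Equiv.Perm (Fin (p+1)) => ∑ j, M j (σ j))
  have hper : tperm M ≤ M i (σ i) + tperm (del M i (σ i)) :=
    calc tperm M = ∑ j, M j (σ j) := hσ
      _ ≤ _ := sum_perm_le_add_tperm_del M σ i
  have := le_tmul M (pinv M) i i (σ i)
  simp only [pinv] at this
  linarith

lemma tmulVec_eq_self_of_le_sub {p : ℕ} {C : Matrix (Fin (p+1)) (Fin (p+1)) ℝ}
    {b : Fin (p+1) → ℝ} (hC : ∀ i j, C i j ≤ b i - b j) (hdiag : ∀ i, 0 ≤ C i i) :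
    tmulVec C b = b := by
  ext i
  refine le_antisymm (tmulVec_le_iff.mpr fun j => ?_) ?_
  · linarith [hC i j]
  · linarith [le_tmulVec C b i i, hdiag i]

/-- Let `A` be an (m+1)×(n+1) real matrix, `b ∈ ℝ^(m+1)`, and `M = A ⊙ Aᵀ`.
If `(M ⊙ M⁻)_{ij} ≤ b_i - b_j` for all `i, j`, then `X = Aᵀ ⊙ (M⁻ ⊙ b)` is a solution of
`A ⊙ X = b`. -/
theorem stmt13 {m n : ℕ} (A : Matrix (Fin (m+1)) (Fin (n+1)) ℝ) (b : Fin (m+1) → ℝ)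
    (h : ∀ i j, tmul (tmul A Aᵀ) (pinv (tmul A Aᵀ)) i j ≤ b i - b j) :
    ∀ i, tmulVec A (tmulVec Aᵀ (tmulVec (pinv (tmul A Aᵀ)) b)) i = b i := by
  rw [tmulVec_tmulVec, tmulVec_tmulVec]
  exact congrFun (tmulVec_eq_self_of_le_sub h (zero_le_tmul_pinv_self _))
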